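/- Let s ≥ 1, let 𝒪 be an invertible complex s×s matrix, b ∈ ℂ^s, 𝟙 = (1,…,1)ᵀ ∈ ℂ^s. Assume A-stability: for every z ∈ ℂ with Re z ≤ 0 the matrix I − z𝒪 is invertible and |R(z)| ≤ 1, where R(z) = 1 + z·bᵀ(I − z𝒪)^{-1}𝟙. Let ζ ∈ ℂ with |ζ| ≤ 1 and ζ ≠ 1 be such that T = 𝒪 + (ζ/(1−ζ))·𝟙bᵀ is invertible. Then every z in the spectrum of T^{-1} satisfies Re z ≥ 0 and z ≠ 0. -/

import Mathlib

/-!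
If `z ∈ σ(Δ(ζ))` had `Re z < 0`, then `1 - z T` would be singular for `T = Δ(ζ)⁻¹`; since
`T` is a rank-one perturbation of `𝒪`, the matrix determinant lemma turns this into
`ζ R(z) = 1`. With `|ζ| ≤ 1` and `|R| ≤ 1` on the left half-plane, `|R|` attains its maximum
at the interior point `z`, so by the maximum modulus principle `R` is constant on the closed
left half-plane; evaluating at `0` gives `ζ = ζ R(0) = 1`.
-/

open Matrix

namespace Matrix

variable {n : Type*} [Fintype n] [DecidableEq n]

theorem det_add_vecMulVec {α : Type*} [CommRing α] {A : Matrix n n α} (hA : IsUnit A.det)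
    (u v : n → α) : (A + vecMulVec u v).det = A.det * (1 + v ⬝ᵥ (A⁻¹ *ᵥ u)) := by
  rw [vecMulVec_eq (Fin 1), det_add_replicateCol_mul_replicateRow hA, Matrix.mul_assoc,
    ← replicateCol_mulVec, replicateRow_mul_replicateCol]
  simp

theorem det_one_sub_smul_eq_zero_of_mem_spectrum_inv {𝕜 : Type*} [Field 𝕜]
    {T : Matrix n n 𝕜} (hT : IsUnit T) {z : 𝕜} (hz : z ∈ spectrum 𝕜 T⁻¹) :
    (1 - z • T).det = 0 := by
  rw [spectrum.mem_iff] at hz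
  by_contra h
  have hresolvent : algebraMap 𝕜 (Matrix n n 𝕜) z - T⁻¹ = -(T⁻¹ * (1 - z • T)) := by
    rw [Algebra.algebraMap_eq_smul_one, Matrix.mul_sub, Matrix.mul_one, Matrix.mul_smul,
      nonsing_inv_mul T ((isUnit_iff_isUnit_det T).mp hT), neg_sub]
  rw [hresolvent] at hz
  exact hz ((isUnit_nonsing_inv_iff.mpr hT).mul
    ((isUnit_iff_isUnit_det _).mpr (isUnit_iff_ne_zero.mpr h))).neg

section
-- Any complete algebra norm would do; one is needed only to differentiate `Ring.inverse`.
attribute [local instance] Matrix.linftyOpNormedRing Matrix.linftyOpNormedAlgebra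

theorem differentiableAt_dotProduct_inv_one_sub_smul_mulVec {𝕜 : Type*} [RCLike 𝕜]
    (M : Matrix n n 𝕜) (u v : n → 𝕜) {x : 𝕜} (hx : IsUnit (1 - x • M)) :
    DifferentiableAt 𝕜 (fun y : 𝕜 => v ⬝ᵥ ((1 - y • M)⁻¹ *ᵥ u)) x := by
  let L : Matrix n n 𝕜 →ₗ[𝕜] 𝕜 :=
    { toFun := fun A => v ⬝ᵥ (A *ᵥ u)
      map_add' := fun A B => by simp [add_mulVec, dotProduct_add]
      map_smul' := fun c A => by simp [smul_mulVec, dotProduct_smul] }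
  have hpencil : DifferentiableAt 𝕜 (fun y : 𝕜 => 1 - y • M) x :=
    (differentiableAt_const _).sub (differentiableAt_id.smul_const M)
  simp_rw [nonsing_inv_eq_ringInverse]
  exact (LinearMap.toContinuousLinearMap L).differentiableAt.comp x (hpencil.inverse hx)

end

end Matrix

namespace RungeKutta

variable {s : Type*} [Fintype s] [DecidableEq s]

noncomputable def stabilityFunction (𝒪 : Matrix s s ℂ) (b : s → ℂ) (z : ℂ) : ℂ :=
  1 + z * (b ⬝ᵥ ((1 - z • 𝒪)⁻¹ *ᵥ fun _ => 1))

def IsAStable (𝒪 : Matrix s s ℂ) (b : s → ℂ) : Prop :=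
  ∀ z : ℂ, z.re ≤ 0 → IsUnit (1 - z • 𝒪) ∧ ‖stabilityFunction 𝒪 b z‖ ≤ 1

variable {𝒪 : Matrix s s ℂ} {b : s → ℂ}

theorem stabilityFunction_zero : stabilityFunction 𝒪 b 0 = 1 := by
  simp [stabilityFunction]

theorem differentiableAt_stabilityFunction {z : ℂ} (hz : IsUnit (1 - z • 𝒪)) :
    DifferentiableAt ℂ (stabilityFunction 𝒪 b) z :=
  (differentiableAt_const 1).add
    (differentiableAt_id.mul (differentiableAt_dotProduct_inv_one_sub_smul_mulVec 𝒪 _ b hz))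

theorem IsAStable.stabilityFunction_eq_one (h : IsAStable 𝒪 b) {z : ℂ} (hz : z.re < 0)
    (h1 : 1 ≤ ‖stabilityFunction 𝒪 b z‖) : stabilityFunction 𝒪 b z = 1 := by
  have hcl : closure {x : ℂ | x.re < 0} = {x | x.re ≤ 0} := Complex.closure_setOfPred_re_lt 0
  have hdiff : DiffContOnCl ℂ (stabilityFunction 𝒪 b) {x | x.re < 0} :=
    DifferentiableOn.diffContOnCl <| hcl ▸ fun x hx =>
      (differentiableAt_stabilityFunction (h x hx).1).differentiableWithinAt
  have hmax : IsMaxOn (‖stabilityFunction 𝒪 b ·‖) {x | x.re < 0} z :=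
    fun x hx => (h x (le_of_lt hx)).2.trans h1
  have hconst := Complex.eqOn_closure_of_isPreconnected_of_isMaxOn_norm
    (convex_halfSpace_re_lt 0).isPreconnected (isOpen_lt Complex.continuous_re continuous_const)
    hdiff hz hmax (hcl ▸ Complex.zero_re.le : (0 : ℂ) ∈ closure {x : ℂ | x.re < 0})
  rw [Function.const_apply, stabilityFunction_zero] at hconst
  exact hconst.symm

theorem det_one_sub_smul_symbol {z ζ : ℂ} (hζ : ζ ≠ 1) (hz : IsUnit (1 - z • 𝒪)) :
    (1 - ζ) * (1 - z • (𝒪 + (ζ / (1 - ζ)) • vecMulVec (fun _ => 1) b)).det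
      = (1 - z • 𝒪).det * (1 - ζ * stabilityFunction 𝒪 b z) := by
  have hrank_one : 1 - z • (𝒪 + (ζ / (1 - ζ)) • vecMulVec (fun _ => 1) b)
      = (1 - z • 𝒪) + vecMulVec (-(z * (ζ / (1 - ζ))) • fun _ => 1) b := by
    ext i j
    simp only [smul_add, Matrix.sub_apply, Matrix.add_apply, Matrix.smul_apply, smul_eq_mul,
      vecMulVec_apply, one_mul, neg_smul, neg_vecMulVec, smul_vecMulVec, Matrix.neg_apply]
    ring
  have hζ' : 1 - ζ ≠ 0 := sub_ne_zero.mpr hζ.symm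
  rw [hrank_one, det_add_vecMulVec ((isUnit_iff_isUnit_det _).mp hz), mulVec_smul,
    dotProduct_smul, stabilityFunction, smul_eq_mul]
  field_simp
  ring

end RungeKutta

open RungeKutta

theorem runge_kutta_symbol_spectrum_right_halfplane_general
    (s : ℕ)
    (𝒪 : Matrix (Fin s) (Fin s) ℂ) (b : Fin s → ℂ)
    (hAstable : ∀ z : ℂ, z.re ≤ 0 →
      IsUnit (1 - z • 𝒪) ∧
        ‖1 + z * (b ⬝ᵥ ((1 - z • 𝒪)⁻¹ *ᵥ fun _ => 1))‖ ≤ 1)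
    (ζ : ℂ) (hζ1 : ‖ζ‖ ≤ 1) (hζ : ζ ≠ 1)
    (hT : IsUnit (𝒪 + (ζ / (1 - ζ)) • vecMulVec (fun _ => 1) b))
    (z : ℂ)
    (hz : z ∈ spectrum ℂ ((𝒪 + (ζ / (1 - ζ)) • vecMulVec (fun _ => 1) b)⁻¹)) :
    0 ≤ z.re ∧ z ≠ 0 := by
  refine ⟨?_, ?_⟩
  · by_contra! hre
    have hU := (hAstable z hre.le).1
    have hζR : ζ * stabilityFunction 𝒪 b z = 1 := by
      have hdet := det_one_sub_smul_symbol (b := b) hζ hU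
      rw [det_one_sub_smul_eq_zero_of_mem_spectrum_inv hT hz, mul_zero, eq_comm,
        mul_eq_zero, sub_eq_zero] at hdet
      exact (hdet.resolve_left ((isUnit_iff_isUnit_det _).mp hU).ne_zero).symm
    have hR1 : 1 ≤ ‖stabilityFunction 𝒪 b z‖ :=
      calc 1 = ‖ζ‖ * ‖stabilityFunction 𝒪 b z‖ := by rw [← norm_mul, hζR, norm_one]
        _ ≤ ‖stabilityFunction 𝒪 b z‖ := mul_le_of_le_one_left (norm_nonneg _) hζ1
    have hR := IsAStable.stabilityFunction_eq_one hAstable hre hR1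
    exact hζ (by rwa [hR, mul_one] at hζR)
  · rintro rfl
    exact (spectrum.zero_mem_iff ℂ).mp hz (isUnit_nonsing_inv_iff.mpr hT)

/-- For an A-stable Runge–Kutta method with invertible coefficient matrix 𝒪,
the spectrum of the matrix symbol Δ(ζ) = (𝒪 + (ζ/(1−ζ))𝟙bᵀ)⁻¹ is contained in
the closed right half-plane minus the origin, for all |ζ| ≤ 1, ζ ≠ 1
(from the proof of Theorem 5.3 of Kovács–Li–Lubich). -/
theorem runge_kutta_symbol_spectrum_right_halfplane
    (s : ℕ) (hs : 1 ≤ s)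
    (𝒪 : Matrix (Fin s) (Fin s) ℂ) (b : Fin s → ℂ) (h𝒪 : IsUnit 𝒪)
    (hAstable : ∀ z : ℂ, z.re ≤ 0 →
      IsUnit (1 - z • 𝒪) ∧
        ‖1 + z * (b ⬝ᵥ ((1 - z • 𝒪)⁻¹ *ᵥ fun _ => 1))‖ ≤ 1)
    (ζ : ℂ) (hζ1 : ‖ζ‖ ≤ 1) (hζ : ζ ≠ 1)
    (hT : IsUnit (𝒪 + (ζ / (1 - ζ)) • vecMulVec (fun _ => 1) b))
    (z : ℂ)
    (hz : z ∈ spectrum ℂ ((𝒪 + (ζ / (1 - ζ)) • vecMulVec (fun _ => 1) b)⁻¹)) :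
    0 ≤ z.re ∧ z ≠ 0 :=
  runge_kutta_symbol_spectrum_right_halfplane_general s 𝒪 b hAstable ζ hζ1 hζ hT z hz
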